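/- Let X ~ N(x, σ²I_n) and Y ~ N(x + δ, σ²I_n) with σ > 0 and δ ∈ ℝ^n nonzero, and let f : ℝ^n → {0,1} be measurable. If S = {z ∈ ℝ^n : ⟨δ, z⟩ ≤ β} for some β ∈ ℝ and P(f(X) = 1) ≥ P(X ∈ S), then P(f(Y) = 1) ≥ P(Y ∈ S). -/

import Mathlib

/-! The density of `N(x + δ, σ²Iₙ)` with respect to `N(x, σ²Iₙ)` is
`z ↦ exp ((⟪δ, z⟫ - ⟪δ, x⟫ - ‖δ‖² / 2) / σ²)`, a nondecreasing function of `⟪δ, z⟫`. So it is at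
most some `t` on the half-space `S` and at least `t` off it. With `A = {f = 1}`, the hypothesis
gives `P(X ∈ S \ A) ≤ P(X ∈ A \ S)`, hence `P(Y ∈ S \ A) ≤ t P(X ∈ S \ A) ≤ t P(X ∈ A \ S) ≤
P(Y ∈ A \ S)`, which is the claim after adding `P(Y ∈ S ∩ A)` (Neyman–Pearson). -/

open MeasureTheory ProbabilityTheory

/-- The standard normal cumulative distribution function Φ. -/
noncomputable def stdNormalCDF (x : ℝ) : ℝ :=
  ((gaussianReal 0 1) (Set.Iic x)).toReal

/-- The inverse Φ⁻¹ of the standard normal cdf. -/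
noncomputable def stdNormalCDFInv (y : ℝ) : ℝ :=
  Function.invFun stdNormalCDF y

/-- The isotropic Gaussian measure `N(μ, σ² Iₙ)` on `ℝⁿ`. -/
noncomputable def isoGaussian (n : ℕ) (μ : EuclideanSpace ℝ (Fin n)) (σ : ℝ) :
    Measure (EuclideanSpace ℝ (Fin n)) :=
  (Measure.pi fun i : Fin n => gaussianReal (μ i) ⟨σ ^ 2, sq_nonneg σ⟩).map
    (MeasurableEquiv.toLp 2 (Fin n → ℝ))

/-- The empirical floor function `L̂` with parameters ρ, σ and `c`. -/
noncomputable def empiricalFloor (ρ σ c z : ℝ) : ℝ :=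
  stdNormalCDF (stdNormalCDFInv (z - c) - 2 * ρ / σ) - c

/-- Empirical smoothing: `h̃(x) = (1/q) ∑ₘ h(x + εₘ)`. -/
noncomputable def empSmooth {n q : ℕ} (h : EuclideanSpace ℝ (Fin n) → Fin n → ℝ)
    (x : EuclideanSpace ℝ (Fin n)) (ε : Fin q → EuclideanSpace ℝ (Fin n)) :
    Fin n → ℝ :=
  fun i => (1 / q : ℝ) * ∑ m : Fin q, h (x + ε m) i

/-- Population smoothing: `h̄(x) = E_{ε ~ N(0,σ²Iₙ)}[h(x + ε)]`. -/
noncomputable def popSmooth {n : ℕ} (σ : ℝ) (h : EuclideanSpace ℝ (Fin n) → Fin n → ℝ)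
    (x : EuclideanSpace ℝ (Fin n)) : Fin n → ℝ :=
  fun i => ∫ ε, h (x + ε) i ∂(isoGaussian n 0 σ)

/-- `kthLargest v k` is the k-th largest entry of `v` (1-indexed). -/
noncomputable def kthLargest {n : ℕ} (v : Fin n → ℝ) (k : ℕ) : ℝ :=
  ((Finset.univ.val.map v).sort (· ≤ ·)).getD (n - k) 0

/-- The descending ordinal rank of the entry `v i` in `v` (best rank among ties). -/
noncomputable def descRank {n : ℕ} (v : Fin n → ℝ) (i : Fin n) : ℕ :=
  (Finset.univ.filter fun j => v i < v j).card + 1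

/-- `A` is a set of `K` indices carrying the `K` largest entries of `v`. -/
def IsTopKSet {n : ℕ} (v : Fin n → ℝ) (K : ℕ) (A : Finset (Fin n)) : Prop :=
  A.card = K ∧ ∀ i ∈ A, ∀ j ∉ A, v j ≤ v i

/-- Sparsification: the largest `⌈τ n⌉` entries are mapped to 1, the rest to 0. -/
noncomputable def sparsify {n : ℕ} (τ : ℝ) (v : Fin n → ℝ) : Fin n → ℝ :=
  fun i => if kthLargest v ⌈τ * n⌉₊ ≤ v i then 1 else 0

open Real RealInnerProductSpace
open scoped ENNReal NNReal

section NeymanPearson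

variable {α : Type*} [MeasurableSpace α] {μ : Measure α} {g : α → ℝ≥0∞} {S A : Set α}

theorem withDensity_apply_le_of_threshold [IsFiniteMeasure μ] (hS : MeasurableSet S)
    (hA : MeasurableSet A) {t : ℝ≥0∞} (hg_le : ∀ z ∈ S, g z ≤ t) (hg_ge : ∀ z ∉ S, t ≤ g z)
    (hμ : μ S ≤ μ A) : μ.withDensity g S ≤ μ.withDensity g A := by
  have h_diff : μ (S \ A) ≤ μ (A \ S) := by
    rw [← measure_inter_add_sdiff S hA, ← measure_inter_add_sdiff A hS, Set.inter_comm] at hμ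
    exact (ENNReal.add_le_add_iff_left (measure_ne_top μ _)).1 hμ
  set ν := μ.withDensity g
  calc ν S = ν (S ∩ A) + ν (S \ A) := (measure_inter_add_sdiff S hA).symm
    _ ≤ ν (S ∩ A) + t * μ (S \ A) := by
        gcongr
        rw [withDensity_apply _ (hS.diff hA), ← setLIntegral_const]
        exact setLIntegral_mono' (hS.diff hA) fun z hz => hg_le z hz.1
    _ ≤ ν (S ∩ A) + t * μ (A \ S) := by gcongr
    _ ≤ ν (A ∩ S) + ν (A \ S) := by
        rw [Set.inter_comm]
        gcongr
        rw [withDensity_apply _ (hA.diff hS), ← setLIntegral_const]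
        exact setLIntegral_mono' (hA.diff hS) fun z hz => hg_ge z hz.2
    _ = ν A := measure_inter_add_sdiff A hS

theorem withDensity_comp_apply_le_of_sublevel [IsFiniteMeasure μ] {L : α → ℝ}
    (hL : Measurable L) {φ : ℝ → ℝ≥0∞} (hφ : Monotone φ) (hA : MeasurableSet A) (β : ℝ)
    (hμ : μ {z | L z ≤ β} ≤ μ A) :
    μ.withDensity (φ ∘ L) {z | L z ≤ β} ≤ μ.withDensity (φ ∘ L) A :=
  withDensity_apply_le_of_threshold (hL measurableSet_Iic) hA (fun _ hz => hφ hz)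
    (fun _ hz => hφ (not_le.1 hz).le) hμ

end NeymanPearson

theorem gaussianReal_add_eq_withDensity (m d : ℝ) {v : ℝ≥0} (hv : v ≠ 0) :
    gaussianReal (m + d) v = (gaussianReal m v).withDensity
      fun t => ENNReal.ofReal (rexp ((d * (t - m) - d ^ 2 / 2) / v)) := by
  rw [gaussianReal_of_var_ne_zero _ hv, gaussianReal_of_var_ne_zero _ hv,
    ← withDensity_mul _ (measurable_gaussianPDF m v) (by fun_prop)]
  congr 1
  funext t
  have hv' : (v : ℝ) ≠ 0 := mod_cast hv
  rw [Pi.mul_apply, gaussianPDF, gaussianPDF, ← ENNReal.ofReal_mul (gaussianPDFReal_nonneg m v t)]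
  simp only [gaussianPDFReal, mul_assoc, ← Real.exp_add]
  congr 3
  field_simp
  ring

theorem MeasureTheory.Measure.pi_eq_withDensity_prod {ι : Type*} [Fintype ι] {X : ι → Type*}
    [∀ i, MeasurableSpace (X i)] {μ ν : ∀ i, Measure (X i)} [∀ i, IsProbabilityMeasure (μ i)]
    [∀ i, SigmaFinite (ν i)] {g : ∀ i, X i → ℝ≥0∞} (hg : ∀ i, Measurable (g i))
    (hν : ∀ i, ν i = (μ i).withDensity (g i)) :
    Measure.pi ν = (Measure.pi μ).withDensity fun z => ∏ i, g i (z i) := by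
  refine Measure.pi_eq fun s hs => ?_
  have h_box : MeasurableSet (Set.univ.pi s) := .univ_pi hs
  have h_indicator : (Set.univ.pi s).indicator (fun z => ∏ i, g i (z i))
      = fun z => ∏ i, (s i).indicator (g i) (z i) := by
    funext z
    by_cases hz : ∀ i, z i ∈ s i
    · rw [Set.indicator_of_mem (Set.mem_univ_pi.2 hz)]
      exact Finset.prod_congr rfl fun i _ => (Set.indicator_of_mem (hz i) _).symm
    · obtain ⟨i, hi⟩ := not_forall.1 hz
      rw [Set.indicator_of_notMem (mt Set.mem_univ_pi.1 hz)]
      exact (Finset.prod_eq_zero (Finset.mem_univ i) (Set.indicator_of_notMem hi _)).symm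
  have h_meas : ∀ i, Measurable ((s i).indicator (g i)) := fun i => (hg i).indicator (hs i)
  rw [withDensity_apply _ h_box, ← lintegral_indicator h_box, h_indicator,
    lintegral_prod_eq_prod_lintegral_of_indepFun _ _ (iIndepFun_pi fun i => (h_meas i).aemeasurable)
      fun i => (h_meas i).comp (measurable_pi_apply i)]
  refine Finset.prod_congr rfl fun i _ => ?_
  rw [(measurePreserving_eval μ i).lintegral_comp (h_meas i), lintegral_indicator (hs i),
    hν i, withDensity_apply _ (hs i)]

theorem MeasurableEquiv.map_withDensity {α β : Type*} [MeasurableSpace α] [MeasurableSpace β]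
    (e : α ≃ᵐ β) (μ : Measure α) {g : α → ℝ≥0∞} (hg : Measurable g) :
    (μ.withDensity g).map e = (μ.map e).withDensity (g ∘ e.symm) := by
  ext E hE
  rw [Measure.map_apply e.measurable hE, withDensity_apply _ (hE.preimage e.measurable),
    withDensity_apply _ hE, setLIntegral_map hE (hg.comp e.symm.measurable) e.measurable]
  simp

instance (n : ℕ) (μ : EuclideanSpace ℝ (Fin n)) (σ : ℝ) :
    IsProbabilityMeasure (isoGaussian n μ σ) :=
  have : ∀ i, IsProbabilityMeasure (gaussianReal (μ i) ⟨σ ^ 2, sq_nonneg σ⟩) :=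
    fun _ => instIsProbabilityMeasureGaussianReal _ _
  Measure.isProbabilityMeasure_map (MeasurableEquiv.toLp 2 (Fin n → ℝ)).measurable.aemeasurable

theorem isoGaussian_add_eq_withDensity (n : ℕ) {σ : ℝ} (hσ : σ ≠ 0)
    (x δ : EuclideanSpace ℝ (Fin n)) :
    isoGaussian n (x + δ) σ = (isoGaussian n x σ).withDensity
      fun z => ENNReal.ofReal (rexp ((⟪δ, z⟫ - ⟪δ, x⟫ - ‖δ‖ ^ 2 / 2) / σ ^ 2)) := by
  have hv : (⟨σ ^ 2, sq_nonneg σ⟩ : ℝ≥0) ≠ 0 := fun h => pow_ne_zero 2 hσ (congrArg NNReal.toReal h)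
  have h_pi : (Measure.pi fun i => gaussianReal ((x + δ) i) ⟨σ ^ 2, sq_nonneg σ⟩)
      = (Measure.pi fun i => gaussianReal (x i) ⟨σ ^ 2, sq_nonneg σ⟩).withDensity
          fun w => ∏ i, ENNReal.ofReal (rexp ((δ i * (w i - x i) - δ i ^ 2 / 2) / σ ^ 2)) := by
    have : ∀ i, IsProbabilityMeasure (gaussianReal (x i) ⟨σ ^ 2, sq_nonneg σ⟩) :=
      fun _ => instIsProbabilityMeasureGaussianReal _ _
    have : ∀ i, IsProbabilityMeasure (gaussianReal ((x + δ) i) ⟨σ ^ 2, sq_nonneg σ⟩) :=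
      fun _ => instIsProbabilityMeasureGaussianReal _ _
    refine Measure.pi_eq_withDensity_prod
      (g := fun i t => ENNReal.ofReal (rexp ((δ i * (t - x i) - δ i ^ 2 / 2) / σ ^ 2)))
      (fun i => by fun_prop) fun i => ?_
    rw [PiLp.add_apply, gaussianReal_add_eq_withDensity (x i) (δ i) hv]
    rfl
  rw [isoGaussian, isoGaussian, h_pi, MeasurableEquiv.map_withDensity _ _ (by fun_prop)]
  congr 1
  funext z
  simp only [Function.comp_apply]
  rw [← ENNReal.ofReal_prod_of_nonneg fun i _ => (exp_pos _).le, ← Real.exp_sum, ← Finset.sum_div]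
  congr 3
  simp only [PiLp.inner_apply, RCLike.inner_apply, conj_trivial, EuclideanSpace.norm_sq_eq]
  rw [Finset.sum_div, ← Finset.sum_sub_distrib, ← Finset.sum_sub_distrib]
  refine Finset.sum_congr rfl fun i _ => ?_
  rw [Real.norm_eq_abs, sq_abs]
  change δ i * (z i - x i) - δ i ^ 2 / 2 = z i * δ i - x i * δ i - δ i ^ 2 / 2
  ring

open RealInnerProductSpace in
theorem stmt4_halfspace_neyman_pearson_le_general
    (n : ℕ) (σ : ℝ) (hσ : 0 < σ)
    (x δ : EuclideanSpace ℝ (Fin n))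
    (f : EuclideanSpace ℝ (Fin n) → ℝ) (hf : Measurable f)
    (β : ℝ) (S : Set (EuclideanSpace ℝ (Fin n)))
    (hS : S = {z | ⟪δ, z⟫ ≤ β})
    (hX : isoGaussian n x σ {z | f z = 1} ≥ isoGaussian n x σ S) :
    isoGaussian n (x + δ) σ {z | f z = 1} ≥ isoGaussian n (x + δ) σ S := by
  subst hS
  have h_ratio_mono :
      Monotone fun s => ENNReal.ofReal (rexp ((s - ⟪δ, x⟫ - ‖δ‖ ^ 2 / 2) / σ ^ 2)) :=
    fun _ _ hab => ENNReal.ofReal_le_ofReal (exp_le_exp.2 (by gcongr))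
  rw [isoGaussian_add_eq_withDensity n hσ.ne' x δ]
  exact withDensity_comp_apply_le_of_sublevel (L := fun z => ⟪δ, z⟫) (by fun_prop) h_ratio_mono
    (hf (measurableSet_singleton 1)) β hX

open RealInnerProductSpace in
/-- Lemma 4.1 of Cohen et al.: for `X ~ N(x, σ²Iₙ)`, `Y ~ N(x+δ, σ²Iₙ)`,
`f : ℝⁿ → {0,1}` measurable and `S = {z : ⟨δ, z⟩ ≤ β}`,
if `P(f(X) = 1) ≥ P(X ∈ S)` then `P(f(Y) = 1) ≥ P(Y ∈ S)`. -/
theorem stmt4_halfspace_neyman_pearson_le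
    (n : ℕ) (σ : ℝ) (hσ : 0 < σ)
    (x δ : EuclideanSpace ℝ (Fin n)) (hδ : δ ≠ 0)
    (f : EuclideanSpace ℝ (Fin n) → ℝ) (hf : Measurable f)
    (hf01 : ∀ z, f z = 0 ∨ f z = 1)
    (β : ℝ) (S : Set (EuclideanSpace ℝ (Fin n)))
    (hS : S = {z | ⟪δ, z⟫ ≤ β})
    (hX : isoGaussian n x σ {z | f z = 1} ≥ isoGaussian n x σ S) :
    isoGaussian n (x + δ) σ {z | f z = 1} ≥ isoGaussian n (x + δ) σ S :=
  stmt4_halfspace_neyman_pearson_le_general n σ hσ x δ f hf β S hS hX
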